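/- For a ∈ (−1/2, 1/2), b ∈ ℝ, τ ∈ ℍ: ∫_{−τ̄}^{i∞} g_{a+1/2, b+1/2}(z)/√(−i(z+τ)) dz = −e^{−πia²τ + 2πia(b+1/2)} R(aτ − b; τ), where g_{a,b}(τ) := Σ_{ν ∈ a+ℤ} ν e^{πiν²τ + 2πiνb} is a unary theta series of weight 3/2 and R is the nonholomorphic completion term R(u;τ) = Σ_{ν∈1/2+ℤ} {sign(ν) − E((ν + Im(u)/Im(τ))√(2 Im τ))}(−1)^{ν−1/2} e^{−πiν²τ−2πiνu}. -/

import Mathlib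

open Real MeasureTheory

/-- `E(z) = 2 ∫₀^z e^{-πu²} du`. -/
noncomputable def Efun (z : ℝ) : ℝ := 2 * ∫ u in (0:ℝ)..z, Real.exp (-π * u ^ 2)

/-- The nonholomorphic completion term
`R(u;τ) = Σ_{ν∈1/2+ℤ} {sign(ν) - E((ν+a)√(2y))} (-1)^{ν-1/2} e^{-πiν²τ - 2πiνu}`,
with `y = Im τ`, `a = Im u / Im τ`, and `ν = n + 1/2`. -/
noncomputable def Rfun (u τ : ℂ) : ℂ :=
  ∑' n : ℤ,
    ((Real.sign ((n : ℝ) + 1/2) -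
        Efun (((n : ℝ) + 1/2 + u.im / τ.im) * Real.sqrt (2 * τ.im)) : ℝ) : ℂ) *
      (-1 : ℂ) ^ n *
      Complex.exp (-(π : ℂ) * Complex.I * ((n : ℂ) + 1/2) ^ 2 * τ -
        2 * (π : ℂ) * Complex.I * ((n : ℂ) + 1/2) * u)

/-- The unary theta function of weight 3/2:
`g_{a,b}(τ) = Σ_{ν∈a+ℤ} ν e^{πiν²τ + 2πiνb}`. -/
noncomputable def gfun (a b τ : ℂ) : ℂ :=
  ∑' n : ℤ, ((n : ℂ) + a) *
    Complex.exp ((π : ℂ) * Complex.I * ((n : ℂ) + a) ^ 2 * τ +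
      2 * (π : ℂ) * Complex.I * ((n : ℂ) + a) * b)

lemma Efun_neg (x : ℝ) : Efun (-x) = -Efun x := by
  have h2 := intervalIntegral.integral_comp_neg (a := (0:ℝ)) (b := x)
    (fun u => Real.exp (-π * u ^ 2))
  simp only [neg_zero] at h2
  have h3 : (∫ u in (0:ℝ)..x, Real.exp (-π * (-u) ^ 2))
      = ∫ u in (0:ℝ)..x, Real.exp (-π * u ^ 2) := by
    apply intervalIntegral.integral_congr; intro u _; simp [neg_pow]
  have h4 : (∫ u in (-x)..(0:ℝ), Real.exp (-π * u ^ 2))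
      = - ∫ u in (0:ℝ)..(-x), Real.exp (-π * u ^ 2) :=
    intervalIntegral.integral_symm 0 (-x)
  rw [Efun, Efun]
  have := h2.symm.trans h3
  rw [h4] at this
  linarith

lemma gauss_tail {c : ℝ} (hc : 0 ≤ c) :
    2 * ∫ u in Set.Ioi c, Real.exp (-π * u ^ 2) = 1 - Efun c := by
  have hint : Integrable (fun u : ℝ => Real.exp (-π * u ^ 2)) := by
    simpa using integrable_exp_neg_mul_sq pi_pos
  have hsplit : (∫ u in Set.Ioc 0 c, Real.exp (-π * u ^ 2))
      + ∫ u in Set.Ioi c, Real.exp (-π * u ^ 2)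
      = ∫ u in Set.Ioi (0:ℝ), Real.exp (-π * u ^ 2) := by
    rw [← MeasureTheory.setIntegral_union (Set.Ioc_disjoint_Ioi le_rfl) measurableSet_Ioi
      hint.integrableOn hint.integrableOn, Set.Ioc_union_Ioi_eq_Ioi hc]
  have h0 : ∫ u in Set.Ioi (0:ℝ), Real.exp (-π * u ^ 2) = 1 / 2 := by
    rw [integral_gaussian_Ioi π, div_self pi_pos.ne', Real.sqrt_one]
  have h1 : ∫ u in Set.Ioc 0 c, Real.exp (-π * u ^ 2)
      = ∫ u in (0:ℝ)..c, Real.exp (-π * u ^ 2) := by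
    rw [intervalIntegral.integral_of_le hc]
  rw [Efun]
  have := hsplit
  rw [h0, h1] at this
  linarith

lemma cont_h {k y : ℝ} (hy : 0 < y) :
    ContinuousOn (fun t : ℝ => Real.exp (-(π * k ^ 2) * t) / Real.sqrt (2 * y + t))
      (Set.Ici 0) := by
  apply ContinuousOn.div
  · exact (Real.continuous_exp.comp (continuous_const.mul continuous_id)).continuousOn
  · exact (Real.continuous_sqrt.comp (continuous_const.add continuous_id)).continuousOn
  · intro t ht
    have : 0 < 2 * y + t := by simp at ht; linarith
    positivity

lemma integrable_h {k y : ℝ} (hk : k ≠ 0) (hy : 0 < y) :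
    IntegrableOn (fun t : ℝ => Real.exp (-(π * k ^ 2) * t) / Real.sqrt (2 * y + t))
      (Set.Ioi (0:ℝ)) := by
  have hb : 0 < π * k ^ 2 := by positivity
  have hdom : IntegrableOn (fun t : ℝ => (Real.sqrt (2 * y))⁻¹ * Real.exp (-(π * k ^ 2) * t))
      (Set.Ioi (0:ℝ)) := (exp_neg_integrableOn_Ioi 0 hb).const_mul _
  refine Integrable.mono' hdom
    (((cont_h hy).mono (Set.Ioi_subset_Ici le_rfl)).aestronglyMeasurable measurableSet_Ioi) ?_
  filter_upwards [ae_restrict_mem measurableSet_Ioi] with t ht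
  have ht' : (0:ℝ) < t := ht
  have h1 : 0 < 2 * y := by linarith
  have h2 : 0 < 2 * y + t := by simp at ht; linarith
  rw [Real.norm_eq_abs, abs_of_nonneg (by positivity)]
  rw [div_le_iff₀ (Real.sqrt_pos.mpr h2), mul_comm ((Real.sqrt (2*y))⁻¹) _, mul_assoc]
  apply le_mul_of_one_le_right (Real.exp_pos _).le
  rw [inv_mul_eq_div, le_div_iff₀ (Real.sqrt_pos.mpr h1), one_mul]
  exact Real.sqrt_le_sqrt (by linarith)

lemma key_integral {k y : ℝ} (hk : k ≠ 0) (hy : 0 < y) :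
    ∫ t in Set.Ioi (0:ℝ), Real.exp (-(π * k ^ 2) * t) / Real.sqrt (2 * y + t)
      = Real.exp (2 * π * y * k ^ 2) * (1 - Efun (|k| * Real.sqrt (2 * y))) / |k| := by
  have hk' : 0 < |k| := abs_pos.mpr hk
  have h2y : 0 < 2 * y := by linarith
  set f : ℝ → ℝ := fun t => |k| * Real.sqrt (2 * y + t) with hf_def
  set f' : ℝ → ℝ := fun t => |k| / (2 * Real.sqrt (2 * y + t)) with hf'_def
  set g : ℝ → ℝ := fun u => (2 * Real.exp (2 * π * y * k ^ 2) / |k|) * Real.exp (-π * u ^ 2)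
    with hg_def
  have hf : ContinuousOn f (Set.Ici 0) :=
    (continuous_const.mul (Real.continuous_sqrt.comp (continuous_const.add continuous_id))).continuousOn
  have hft : Filter.Tendsto f Filter.atTop Filter.atTop := by
    apply Filter.Tendsto.const_mul_atTop hk'
    have h1 : Filter.Tendsto (fun t : ℝ => 2 * y + t) Filter.atTop Filter.atTop :=
      Filter.tendsto_atTop_add_const_left _ _ Filter.tendsto_id
    have h2 : Filter.Tendsto (fun x : ℝ => Real.sqrt x) Filter.atTop Filter.atTop := by
      apply Filter.tendsto_atTop_atTop.mpr
      intro C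
      exact ⟨C ^ 2 + 1, fun x hx => by
        nlinarith [Real.sq_sqrt (by nlinarith : (0:ℝ) ≤ x), Real.sqrt_nonneg x,
          Real.sqrt_le_sqrt (le_refl x)]⟩
    exact h2.comp h1
  have hff' : ∀ x ∈ Set.Ioi (0:ℝ), HasDerivWithinAt f (f' x) (Set.Ioi x) x := by
    intro x hx
    have hpos : 0 < 2 * y + x := by simp at hx; linarith
    have h1 : HasDerivAt (fun t : ℝ => 2 * y + t) 1 x := by
      simpa using (hasDerivAt_id x).const_add (2 * y)
    have h2 : HasDerivAt (fun t : ℝ => Real.sqrt (2 * y + t))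
        (1 / (2 * Real.sqrt (2 * y + x)) * 1) x :=
      (Real.hasDerivAt_sqrt hpos.ne').comp x h1
    have h3 : HasDerivAt f (|k| * (1 / (2 * Real.sqrt (2 * y + x)) * 1)) x := h2.const_mul _
    have : |k| * (1 / (2 * Real.sqrt (2 * y + x)) * 1) = f' x := by
      rw [hf'_def]; ring
    rw [this] at h3
    exact h3.hasDerivWithinAt
  have hg_cont : ContinuousOn g (f '' Set.Ioi 0) :=
    (continuous_const.mul (Real.continuous_exp.comp (by continuity))).continuousOn
  have hg1 : IntegrableOn g (f '' Set.Ici 0) :=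
    (((integrable_exp_neg_mul_sq pi_pos).const_mul _).integrableOn)
  have heq : Set.EqOn (fun x => f' x • (g ∘ f) x)
      (fun t : ℝ => Real.exp (-(π * k ^ 2) * t) / Real.sqrt (2 * y + t)) (Set.Ici 0) := by
    intro x hx
    have hpos : 0 < 2 * y + x := by simp at hx; linarith
    have hs : Real.sqrt (2 * y + x) > 0 := Real.sqrt_pos.mpr hpos
    have hsq : (|k| * Real.sqrt (2 * y + x)) ^ 2 = k ^ 2 * (2 * y + x) := by
      rw [mul_pow, sq_abs, Real.sq_sqrt hpos.le]
    simp only [hf'_def, hg_def, hf_def, Function.comp_apply, smul_eq_mul]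
    rw [hsq]
    rw [show -π * (k ^ 2 * (2 * y + x)) = -(π * k ^ 2) * x + (-(2 * π * y * k ^ 2)) by ring,
      Real.exp_add]
    rw [show -(2 * π * y * k ^ 2) = -(2 * π * y * k ^ 2) from rfl]
    rw [Real.exp_neg (2 * π * y * k ^ 2)]
    field_simp
  have hg2 : IntegrableOn (fun x => f' x • (g ∘ f) x) (Set.Ici 0) := by
    rw [integrableOn_congr_fun heq measurableSet_Ici]
    exact Iff.mpr integrableOn_Ici_iff_integrableOn_Ioi (integrable_h hk hy)
  have main := MeasureTheory.integral_comp_smul_deriv_Ioi hf hft hff' hg_cont hg1 hg2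
  have hLHS : ∫ x in Set.Ioi (0:ℝ), f' x • (g ∘ f) x
      = ∫ t in Set.Ioi (0:ℝ), Real.exp (-(π * k ^ 2) * t) / Real.sqrt (2 * y + t) :=
    setIntegral_congr_fun measurableSet_Ioi (heq.mono (Set.Ioi_subset_Ici le_rfl))
  have hf0 : f 0 = |k| * Real.sqrt (2 * y) := by simp [hf_def]
  have hc : 0 ≤ |k| * Real.sqrt (2 * y) := by positivity
  have hRHS : ∫ u in Set.Ioi (f 0), g u
      = Real.exp (2 * π * y * k ^ 2) * (1 - Efun (|k| * Real.sqrt (2 * y))) / |k| := by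
    rw [hf0, hg_def]
    rw [MeasureTheory.integral_const_mul]
    have := gauss_tail hc
    have h2 : (∫ u in Set.Ioi (|k| * Real.sqrt (2 * y)), Real.exp (-π * u ^ 2))
        = (1 - Efun (|k| * Real.sqrt (2 * y))) / 2 := by linarith
    rw [h2]
    field_simp
  rw [← hLHS, main, hRHS]

lemma sign_mul_aux {x : ℝ} (s : ℝ) (hx : x ≠ 0) :
    x * (1 - Efun (|x| * s)) / |x| = Real.sign x - Efun (x * s) := by
  rcases hx.lt_or_gt with h | h
  · rw [abs_of_neg h, Real.sign_of_neg h,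
      show -x * s = -(x * s) by ring, Efun_neg,
      div_eq_iff (neg_ne_zero.mpr hx)]
    ring
  · rw [abs_of_pos h, Real.sign_of_pos h, mul_comm,
      mul_div_assoc, div_self hx, mul_one]

lemma int_cast_le_neg_one {n : ℤ} (h : n < 0) : (n:ℝ) ≤ -1 := by
  have : n ≤ -1 := by omega
  exact_mod_cast this

lemma sign_shift {a : ℝ} (ha1 : -(1:ℝ)/2 < a) (ha2 : a < 1/2) (n : ℤ) :
    Real.sign ((n:ℝ) + a + 1/2) = Real.sign ((n:ℝ) + 1/2) := by
  rcases le_or_gt 0 n with h | h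
  · have : (0:ℝ) ≤ n := by exact_mod_cast h
    rw [Real.sign_of_pos (by linarith), Real.sign_of_pos (by linarith)]
  · have := int_cast_le_neg_one h
    rw [Real.sign_of_neg (by linarith), Real.sign_of_neg (by linarith)]

lemma abs_int_add_ge {s : ℝ} (h0 : 0 < s) (h1 : s < 1) (n : ℤ) :
    min s (1 - s) ≤ |(n:ℝ) + s| := by
  rcases le_or_gt 0 n with h | h
  · have : (0:ℝ) ≤ n := by exact_mod_cast h
    rw [abs_of_pos (by linarith)]
    exact le_trans (min_le_left _ _) (by linarith)
  · have := int_cast_le_neg_one h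
    rw [abs_of_neg (by linarith)]
    exact le_trans (min_le_right _ _) (by linarith)

lemma summable_gauss_shift {y : ℝ} (s : ℝ) (hy : 0 < y) :
    Summable fun n : ℤ => Real.exp (-(π * ((n:ℝ) + s) ^ 2 * y)) := by
  have h : Summable fun n : ℤ =>
      jacobiTheta₂_term n (Complex.I * (y * s)) (Complex.I * y) :=
    (summable_jacobiTheta₂_term_iff _ _).mpr (by simp [hy])
  have h2 : Summable fun n : ℤ =>
      ‖jacobiTheta₂_term n (Complex.I * (y * s)) (Complex.I * y)‖ :=
    summable_norm_iff.mpr h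
  have h3 := h2.mul_left (Real.exp (-(π * s ^ 2 * y)))
  apply h3.congr
  intro n
  rw [norm_jacobiTheta₂_term, ← Real.exp_add]
  congr 1
  simp only [Complex.mul_im, Complex.I_re, Complex.I_im, Complex.ofReal_re, Complex.ofReal_im,
    Complex.mul_re, Complex.ofReal_mul]
  push_cast
  ring

lemma integral_exp_neg_mul_Ioi' {b : ℝ} (hb : 0 < b) :
    ∫ t in Set.Ioi (0:ℝ), Real.exp (-b * t) = b⁻¹ := by
  have h := MeasureTheory.integral_comp_mul_left_Ioi (fun x => Real.exp (-x)) 0 hb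
  simp only [mul_zero, integral_exp_neg_Ioi, neg_zero, Real.exp_zero, smul_eq_mul,
    mul_one] at h
  simpa [neg_mul] using h

/-- the constant (t-independent) part of the n-th term of the integrand -/
noncomputable def cF (a b : ℝ) (τ : ℂ) (n : ℤ) : ℂ :=
  Complex.I * (((n:ℝ) + a + 1/2 : ℝ) : ℂ) *
    Complex.exp ((π : ℂ) * Complex.I * ((((n:ℝ) + a + 1/2 : ℝ)) : ℂ) ^ 2 * (-(starRingEnd ℂ τ)) +
      2 * (π : ℂ) * Complex.I * ((((n:ℝ) + a + 1/2 : ℝ)) : ℂ) * (((b + 1/2 : ℝ)) : ℂ))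

lemma norm_cF (a b : ℝ) (τ : ℂ) (n : ℤ) :
    ‖cF a b τ n‖ = |(n:ℝ) + a + 1/2| * Real.exp (-(π * ((n:ℝ) + a + 1/2) ^ 2 * τ.im)) := by
  rw [cF, norm_mul, norm_mul, Complex.norm_I, one_mul, Complex.norm_real, Real.norm_eq_abs,
    Complex.norm_exp]
  congr 2
  simp only [Complex.add_re, Complex.mul_re, Complex.mul_im, Complex.I_re, Complex.I_im,
    Complex.ofReal_re, Complex.ofReal_im, Complex.neg_re, Complex.neg_im, Complex.conj_re,
    Complex.conj_im, Complex.re_ofNat, Complex.im_ofNat, pow_two]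
  ring

lemma expW_eq (a b : ℝ) (τ : ℂ) (n : ℤ) :
    Complex.exp ((π : ℂ) * Complex.I * ((((n:ℝ) + a + 1/2 : ℝ)) : ℂ) ^ 2 * (-(starRingEnd ℂ τ)) +
        2 * (π : ℂ) * Complex.I * ((((n:ℝ) + a + 1/2 : ℝ)) : ℂ) * (((b + 1/2 : ℝ)) : ℂ)) *
      ((Real.exp (2 * π * τ.im * ((n:ℝ) + a + 1/2) ^ 2) : ℝ) : ℂ)
    = Complex.exp (-(π : ℂ) * Complex.I * ((((n:ℝ) + a + 1/2 : ℝ)) : ℂ) ^ 2 * τ +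
        2 * (π : ℂ) * Complex.I * ((((n:ℝ) + a + 1/2 : ℝ)) : ℂ) * (((b + 1/2 : ℝ)) : ℂ)) := by
  rw [Complex.ofReal_exp, ← Complex.exp_add]
  congr 1
  have hsub := Complex.sub_conj τ
  push_cast at hsub ⊢
  linear_combination (π * Complex.I * ((n:ℂ) + a + 1/2) ^ 2) * hsub +
    (2 * π * (τ.im:ℂ) * ((n:ℂ) + a + 1/2) ^ 2) * Complex.I_sq

lemma exp_pi_div_two_I : Complex.exp (((π/2 : ℝ) : ℂ) * Complex.I) = Complex.I := by
  rw [Complex.exp_mul_I, ← Complex.ofReal_cos, ← Complex.ofReal_sin,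
    Real.cos_pi_div_two, Real.sin_pi_div_two]
  simp

lemma term_eq {a : ℝ} (ha1 : -(1:ℝ)/2 < a) (ha2 : a < 1/2) (b : ℝ) {τ : ℂ} (hτ : 0 < τ.im)
    (n : ℤ) :
    cF a b τ n * ((Real.exp (2 * π * τ.im * ((n:ℝ) + a + 1/2) ^ 2) *
        (1 - Efun (|(n:ℝ) + a + 1/2| * Real.sqrt (2 * τ.im))) / |(n:ℝ) + a + 1/2| : ℝ) : ℂ)
    = -Complex.exp (-(π : ℂ) * Complex.I * (a : ℂ) ^ 2 * τ +
          2 * (π : ℂ) * Complex.I * (a : ℂ) * ((b : ℂ) + 1/2)) *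
        ((((Real.sign ((n : ℝ) + 1/2) -
            Efun (((n : ℝ) + 1/2 + ((a:ℂ) * τ - (b:ℂ)).im / τ.im) * Real.sqrt (2 * τ.im)) : ℝ)) : ℂ) *
          (-1 : ℂ) ^ n *
          Complex.exp (-(π : ℂ) * Complex.I * ((n : ℂ) + 1/2) ^ 2 * τ -
            2 * (π : ℂ) * Complex.I * ((n : ℂ) + 1/2) * ((a:ℂ) * τ - (b:ℂ)))) := by
  have hνne : (n:ℝ) + a + 1/2 ≠ 0 := by
    have hm : 0 < min (a + 1/2) (1 - (a + 1/2)) := lt_min (by linarith) (by linarith)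
    have h2 : min (a + 1/2) (1 - (a + 1/2)) ≤ |(n:ℝ) + a + 1/2| := by
      rw [add_assoc]
      exact abs_int_add_ge (by linarith) (by linarith) n
    exact abs_pos.mp (lt_of_lt_of_le hm h2)
  have him : ((a:ℂ) * τ - (b:ℂ)).im = a * τ.im := by simp
  have harg : ((n : ℝ) + 1/2 + ((a:ℂ) * τ - (b:ℂ)).im / τ.im) * Real.sqrt (2 * τ.im)
      = ((n:ℝ) + a + 1/2) * Real.sqrt (2 * τ.im) := by
    rw [him, mul_div_assoc, div_self hτ.ne', mul_one]
    ring_nf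
  rw [harg, ← sign_shift ha1 ha2 n]
  have hcoef : ((((n:ℝ) + a + 1/2 : ℝ)) : ℂ) *
      ((Real.exp (2 * π * τ.im * ((n:ℝ) + a + 1/2) ^ 2) *
        (1 - Efun (|(n:ℝ) + a + 1/2| * Real.sqrt (2 * τ.im))) / |(n:ℝ) + a + 1/2| : ℝ) : ℂ)
      = ((Real.exp (2 * π * τ.im * ((n:ℝ) + a + 1/2) ^ 2) : ℝ) : ℂ) *
        ((Real.sign ((n:ℝ) + a + 1/2) -
          Efun (((n:ℝ) + a + 1/2) * Real.sqrt (2 * τ.im)) : ℝ) : ℂ) := by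
    rw [← Complex.ofReal_mul, ← Complex.ofReal_mul]
    congr 1
    rw [← sign_mul_aux (Real.sqrt (2 * τ.im)) hνne]
    ring
  have hKey : Complex.I * Complex.exp (-(π : ℂ) * Complex.I * ((((n:ℝ) + a + 1/2 : ℝ)) : ℂ) ^ 2 * τ +
        2 * (π : ℂ) * Complex.I * ((((n:ℝ) + a + 1/2 : ℝ)) : ℂ) * (((b + 1/2 : ℝ)) : ℂ))
      = -Complex.exp (-(π : ℂ) * Complex.I * (a : ℂ) ^ 2 * τ +
          2 * (π : ℂ) * Complex.I * (a : ℂ) * ((b : ℂ) + 1/2)) *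
        ((-1 : ℂ) ^ n *
          Complex.exp (-(π : ℂ) * Complex.I * ((n : ℂ) + 1/2) ^ 2 * τ -
            2 * (π : ℂ) * Complex.I * ((n : ℂ) + 1/2) * ((a:ℂ) * τ - (b:ℂ)))) := by
    have hW : -(π : ℂ) * Complex.I * ((((n:ℝ) + a + 1/2 : ℝ)) : ℂ) ^ 2 * τ +
        2 * (π : ℂ) * Complex.I * ((((n:ℝ) + a + 1/2 : ℝ)) : ℂ) * (((b + 1/2 : ℝ)) : ℂ)
        = ((-(π : ℂ) * Complex.I * (a : ℂ) ^ 2 * τ +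
            2 * (π : ℂ) * Complex.I * (a : ℂ) * ((b : ℂ) + 1/2)) +
          (-(π : ℂ) * Complex.I * ((n : ℂ) + 1/2) ^ 2 * τ -
            2 * (π : ℂ) * Complex.I * ((n : ℂ) + 1/2) * ((a:ℂ) * τ - (b:ℂ))))
          + (n : ℂ) * ((π : ℂ) * Complex.I) + ((π/2 : ℝ) : ℂ) * Complex.I := by
      push_cast
      ring
    rw [hW, Complex.exp_add, Complex.exp_add, Complex.exp_int_mul, Complex.exp_pi_mul_I,
      exp_pi_div_two_I, Complex.exp_add]
    linear_combination (Complex.exp (-(π : ℂ) * Complex.I * (a : ℂ) ^ 2 * τ +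
          2 * (π : ℂ) * Complex.I * (a : ℂ) * ((b : ℂ) + 1/2)) *
        Complex.exp (-(π : ℂ) * Complex.I * ((n : ℂ) + 1/2) ^ 2 * τ -
            2 * (π : ℂ) * Complex.I * ((n : ℂ) + 1/2) * ((a:ℂ) * τ - (b:ℂ))) * (-1 : ℂ) ^ n) *
      Complex.I_sq
  rw [cF]
  calc Complex.I * (((n:ℝ) + a + 1/2 : ℝ) : ℂ) *
        Complex.exp ((π : ℂ) * Complex.I * ((((n:ℝ) + a + 1/2 : ℝ)) : ℂ) ^ 2 * (-(starRingEnd ℂ τ)) +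
          2 * (π : ℂ) * Complex.I * ((((n:ℝ) + a + 1/2 : ℝ)) : ℂ) * (((b + 1/2 : ℝ)) : ℂ)) *
        ((Real.exp (2 * π * τ.im * ((n:ℝ) + a + 1/2) ^ 2) *
          (1 - Efun (|(n:ℝ) + a + 1/2| * Real.sqrt (2 * τ.im))) / |(n:ℝ) + a + 1/2| : ℝ) : ℂ)
      = Complex.I * ((((n:ℝ) + a + 1/2 : ℝ) : ℂ) *
          ((Real.exp (2 * π * τ.im * ((n:ℝ) + a + 1/2) ^ 2) *
            (1 - Efun (|(n:ℝ) + a + 1/2| * Real.sqrt (2 * τ.im))) / |(n:ℝ) + a + 1/2| : ℝ) : ℂ)) *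
          Complex.exp ((π : ℂ) * Complex.I * ((((n:ℝ) + a + 1/2 : ℝ)) : ℂ) ^ 2 * (-(starRingEnd ℂ τ)) +
            2 * (π : ℂ) * Complex.I * ((((n:ℝ) + a + 1/2 : ℝ)) : ℂ) * (((b + 1/2 : ℝ)) : ℂ)) := by
        ring
    _ = Complex.I * (((Real.sign ((n:ℝ) + a + 1/2) -
            Efun (((n:ℝ) + a + 1/2) * Real.sqrt (2 * τ.im)) : ℝ)) : ℂ) *
          (Complex.exp ((π : ℂ) * Complex.I * ((((n:ℝ) + a + 1/2 : ℝ)) : ℂ) ^ 2 * (-(starRingEnd ℂ τ)) +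
            2 * (π : ℂ) * Complex.I * ((((n:ℝ) + a + 1/2 : ℝ)) : ℂ) * (((b + 1/2 : ℝ)) : ℂ)) *
           ((Real.exp (2 * π * τ.im * ((n:ℝ) + a + 1/2) ^ 2) : ℝ) : ℂ)) := by
        rw [hcoef]; ring
    _ = (((Real.sign ((n:ℝ) + a + 1/2) -
            Efun (((n:ℝ) + a + 1/2) * Real.sqrt (2 * τ.im)) : ℝ)) : ℂ) *
          (Complex.I * Complex.exp (-(π : ℂ) * Complex.I * ((((n:ℝ) + a + 1/2 : ℝ)) : ℂ) ^ 2 * τ +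
            2 * (π : ℂ) * Complex.I * ((((n:ℝ) + a + 1/2 : ℝ)) : ℂ) * (((b + 1/2 : ℝ)) : ℂ))) := by
        rw [expW_eq]; ring
    _ = (((Real.sign ((n:ℝ) + a + 1/2) -
            Efun (((n:ℝ) + a + 1/2) * Real.sqrt (2 * τ.im)) : ℝ)) : ℂ) *
          (-Complex.exp (-(π : ℂ) * Complex.I * (a : ℂ) ^ 2 * τ +
            2 * (π : ℂ) * Complex.I * (a : ℂ) * ((b : ℂ) + 1/2)) *
          ((-1 : ℂ) ^ n *
            Complex.exp (-(π : ℂ) * Complex.I * ((n : ℂ) + 1/2) ^ 2 * τ -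
              2 * (π : ℂ) * Complex.I * ((n : ℂ) + 1/2) * ((a:ℂ) * τ - (b:ℂ))))) := by
        rw [hKey]
    _ = -Complex.exp (-(π : ℂ) * Complex.I * (a : ℂ) ^ 2 * τ +
            2 * (π : ℂ) * Complex.I * (a : ℂ) * ((b : ℂ) + 1/2)) *
          ((((Real.sign ((n:ℝ) + a + 1/2) -
            Efun (((n:ℝ) + a + 1/2) * Real.sqrt (2 * τ.im)) : ℝ)) : ℂ) *
          (-1 : ℂ) ^ n *
          Complex.exp (-(π : ℂ) * Complex.I * ((n : ℂ) + 1/2) ^ 2 * τ -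
            2 * (π : ℂ) * Complex.I * ((n : ℂ) + 1/2) * ((a:ℂ) * τ - (b:ℂ)))) := by
        ring

lemma h_le {k y t : ℝ} (hy : 0 < y) (ht : 0 < t) :
    Real.exp (-(π * k ^ 2) * t) / Real.sqrt (2 * y + t)
      ≤ (Real.sqrt (2 * y))⁻¹ * Real.exp (-(π * k ^ 2) * t) := by
  have h1 : 0 < 2 * y := by linarith
  have h2 : 0 < 2 * y + t := by linarith
  rw [div_le_iff₀ (Real.sqrt_pos.mpr h2), mul_comm ((Real.sqrt (2*y))⁻¹) _, mul_assoc]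
  apply le_mul_of_one_le_right (Real.exp_pos _).le
  rw [inv_mul_eq_div, le_div_iff₀ (Real.sqrt_pos.mpr h1), one_mul]
  exact Real.sqrt_le_sqrt (by linarith)


/-- For `a ∈ (-1/2,1/2)`, `b ∈ ℝ`, `τ ∈ ℍ`:
`∫_{-τ̄}^{i∞} g_{a+1/2,b+1/2}(z)/√(-i(z+τ)) dz = -e^{-πia²τ + 2πia(b+1/2)} R(aτ-b;τ)`,
where the path is parametrized as `z = -τ̄ + it`, `t ∈ (0,∞)`, `dz = i dt`. -/
theorem period_integral_eq_R (a : ℝ) (ha : a ∈ Set.Ioo (-(1:ℝ)/2) (1/2)) (b : ℝ)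
    (τ : ℂ) (hτ : 0 < τ.im) :
    ∫ t in Set.Ioi (0:ℝ),
        Complex.I * gfun ((a : ℂ) + 1/2) ((b : ℂ) + 1/2) (-(starRingEnd ℂ τ) + Complex.I * (t : ℂ)) /
          ((-Complex.I * ((-(starRingEnd ℂ τ) + Complex.I * (t : ℂ)) + τ)) ^ ((1:ℂ)/2))
      = -Complex.exp (-(π : ℂ) * Complex.I * (a : ℂ) ^ 2 * τ +
            2 * (π : ℂ) * Complex.I * (a : ℂ) * ((b : ℂ) + 1/2)) *
          Rfun ((a : ℂ) * τ - (b : ℂ)) τ := by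
  obtain ⟨ha1, ha2⟩ := ha
  have hy : 0 < τ.im := hτ
  have hm : 0 < min (a + 1/2) (1 - (a + 1/2)) := lt_min (by linarith) (by linarith)
  have hmle : ∀ n : ℤ, min (a + 1/2) (1 - (a + 1/2)) ≤ |(n:ℝ) + a + 1/2| := by
    intro n
    rw [add_assoc]
    exact abs_int_add_ge (by linarith) (by linarith) n
  have hνne : ∀ n : ℤ, (n:ℝ) + a + 1/2 ≠ 0 := fun n =>
    abs_pos.mp (lt_of_lt_of_le hm (hmle n))
  set F : ℤ → ℝ → ℂ := fun n t => cF a b τ n *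
    ((Real.exp (-(π * ((n:ℝ) + a + 1/2) ^ 2) * t) / Real.sqrt (2 * τ.im + t) : ℝ) : ℂ) with hF
  have hb : ∀ n : ℤ, 0 < π * ((n:ℝ) + a + 1/2) ^ 2 := fun n => by
    have := hνne n; positivity
  have hInt : ∀ n : ℤ, IntegrableOn (F n) (Set.Ioi (0:ℝ)) := fun n =>
    ((integrable_h (hνne n) hy).ofReal (𝕜 := ℂ)).const_mul _
  -- bound on the integral of the norm
  have hnormle : ∀ n : ℤ, (∫ t in Set.Ioi (0:ℝ), ‖F n t‖) ≤
      ‖cF a b τ n‖ * ((Real.sqrt (2 * τ.im))⁻¹ * (π * ((n:ℝ) + a + 1/2) ^ 2)⁻¹) := by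
    intro n
    have hdom : IntegrableOn (fun t : ℝ => (‖cF a b τ n‖ * (Real.sqrt (2 * τ.im))⁻¹) *
        Real.exp (-(π * ((n:ℝ) + a + 1/2) ^ 2) * t)) (Set.Ioi (0:ℝ)) :=
      (exp_neg_integrableOn_Ioi 0 (hb n)).const_mul _
    have hle : ∀ t ∈ Set.Ioi (0:ℝ), ‖F n t‖ ≤ (‖cF a b τ n‖ * (Real.sqrt (2 * τ.im))⁻¹) *
        Real.exp (-(π * ((n:ℝ) + a + 1/2) ^ 2) * t) := by
      intro t ht
      have ht' : (0:ℝ) < t := ht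
      have h2 : 0 < 2 * τ.im + t := by linarith
      rw [hF]
      simp only [norm_mul, Complex.norm_real, Real.norm_eq_abs]
      rw [abs_of_nonneg (by positivity)]
      rw [mul_assoc]
      exact mul_le_mul_of_nonneg_left (h_le hy ht') (norm_nonneg _)
    calc (∫ t in Set.Ioi (0:ℝ), ‖F n t‖)
        ≤ ∫ t in Set.Ioi (0:ℝ), (‖cF a b τ n‖ * (Real.sqrt (2 * τ.im))⁻¹) *
            Real.exp (-(π * ((n:ℝ) + a + 1/2) ^ 2) * t) :=
          setIntegral_mono_on (hInt n).norm hdom measurableSet_Ioi hle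
      _ = (‖cF a b τ n‖ * (Real.sqrt (2 * τ.im))⁻¹) * (π * ((n:ℝ) + a + 1/2) ^ 2)⁻¹ := by
          rw [MeasureTheory.integral_const_mul, integral_exp_neg_mul_Ioi' (hb n)]
      _ = ‖cF a b τ n‖ * ((Real.sqrt (2 * τ.im))⁻¹ * (π * ((n:ℝ) + a + 1/2) ^ 2)⁻¹) := by
          ring
  -- summability of the norms
  have hsum : Summable (fun n : ℤ => ∫ t in Set.Ioi (0:ℝ), ‖F n t‖) := by
    have hS : Summable (fun n : ℤ =>
        ((Real.sqrt (2 * τ.im))⁻¹ * π⁻¹ * (min (a + 1/2) (1 - (a + 1/2)))⁻¹) *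
          Real.exp (-(π * ((n:ℝ) + (a + 1/2)) ^ 2 * τ.im))) :=
      (summable_gauss_shift (a + 1/2) hy).mul_left _
    apply Summable.of_nonneg_of_le (fun n => integral_nonneg (fun t => norm_nonneg _)) _ hS
    intro n
    refine le_trans (hnormle n) ?_
    rw [norm_cF]
    have habs : 0 < |(n:ℝ) + a + 1/2| := lt_of_lt_of_le hm (hmle n)
    have h2 : |(n:ℝ) + a + 1/2| * ((Real.sqrt (2 * τ.im))⁻¹ *
        (π * ((n:ℝ) + a + 1/2) ^ 2)⁻¹)
        = (Real.sqrt (2 * τ.im))⁻¹ * π⁻¹ * |(n:ℝ) + a + 1/2|⁻¹ := by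
      rw [← sq_abs ((n:ℝ) + a + 1/2), mul_inv, sq, mul_inv]
      rw [show |(n:ℝ) + a + 1/2| * ((Real.sqrt (2 * τ.im))⁻¹ *
          (π⁻¹ * (|(n:ℝ) + a + 1/2|⁻¹ * |(n:ℝ) + a + 1/2|⁻¹)))
        = (Real.sqrt (2 * τ.im))⁻¹ * π⁻¹ * |(n:ℝ) + a + 1/2|⁻¹ *
            (|(n:ℝ) + a + 1/2| * |(n:ℝ) + a + 1/2|⁻¹) from by ring]
      rw [mul_inv_cancel₀ habs.ne', mul_one]
    have h3 : ((n:ℝ) + (a + 1/2)) ^ 2 = ((n:ℝ) + a + 1/2) ^ 2 := by ring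
    rw [h3]
    calc |(n:ℝ) + a + 1/2| * Real.exp (-(π * ((n:ℝ) + a + 1/2) ^ 2 * τ.im)) *
          ((Real.sqrt (2 * τ.im))⁻¹ * (π * ((n:ℝ) + a + 1/2) ^ 2)⁻¹)
        = Real.exp (-(π * ((n:ℝ) + a + 1/2) ^ 2 * τ.im)) *
            ((Real.sqrt (2 * τ.im))⁻¹ * π⁻¹ * |(n:ℝ) + a + 1/2|⁻¹) := by
          rw [← h2]; ring
      _ ≤ Real.exp (-(π * ((n:ℝ) + a + 1/2) ^ 2 * τ.im)) *
            ((Real.sqrt (2 * τ.im))⁻¹ * π⁻¹ * (min (a + 1/2) (1 - (a + 1/2)))⁻¹) := by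
          apply mul_le_mul_of_nonneg_left _ (Real.exp_pos _).le
          apply mul_le_mul_of_nonneg_left _ (by positivity)
          exact inv_anti₀ hm (hmle n)
      _ = ((Real.sqrt (2 * τ.im))⁻¹ * π⁻¹ * (min (a + 1/2) (1 - (a + 1/2)))⁻¹) *
            Real.exp (-(π * ((n:ℝ) + a + 1/2) ^ 2 * τ.im)) := by ring
  -- exchange sum and integral
  have hmeq := MeasureTheory.integral_tsum_of_summable_integral_norm
    (μ := volume.restrict (Set.Ioi (0:ℝ))) hInt hsum
  -- pointwise identity
  have hpt : ∀ t ∈ Set.Ioi (0:ℝ), (∑' n : ℤ, F n t)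
      = Complex.I * gfun ((a : ℂ) + 1/2) ((b : ℂ) + 1/2)
            (-(starRingEnd ℂ τ) + Complex.I * (t : ℂ)) /
          ((-Complex.I * ((-(starRingEnd ℂ τ) + Complex.I * (t : ℂ)) + τ)) ^ ((1:ℂ)/2)) := by
    intro t ht
    have ht' : (0:ℝ) < t := ht
    have h2yt : 0 < 2 * τ.im + t := by linarith
    have hz : -(starRingEnd ℂ τ) + Complex.I * (t:ℂ) + τ = ((2 * τ.im + t : ℝ):ℂ) * Complex.I := by
      have hsub := Complex.sub_conj τ
      push_cast at hsub ⊢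
      linear_combination hsub
    have hden : (-Complex.I * ((-(starRingEnd ℂ τ) + Complex.I * (t:ℂ)) + τ)) ^ ((1:ℂ)/2)
        = ((Real.sqrt (2 * τ.im + t) : ℝ) : ℂ) := by
      have h1 : -Complex.I * ((-(starRingEnd ℂ τ) + Complex.I * (t:ℂ)) + τ)
          = ((2 * τ.im + t : ℝ):ℂ) := by
        rw [hz]
        push_cast
        linear_combination (-((2:ℂ) * τ.im + t)) * Complex.I_sq
      rw [h1, show ((1:ℂ)/2) = ((1/2 : ℝ):ℂ) by norm_num, ← Complex.ofReal_cpow h2yt.le,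
        ← Real.sqrt_eq_rpow]
    rw [hden, gfun, mul_comm Complex.I, mul_div_assoc, ← tsum_mul_right]
    refine tsum_congr fun n => ?_
    have hsqne : ((Real.sqrt (2 * τ.im + t) : ℝ) : ℂ) ≠ 0 := by
      exact_mod_cast (Real.sqrt_pos.mpr h2yt).ne'
    rw [hF]
    simp only []
    rw [cF, Complex.ofReal_div, Complex.ofReal_exp]
    simp only [mul_div_assoc']
    congr 1
    have hexp : Complex.exp ((π : ℂ) * Complex.I * ((((n:ℝ) + a + 1/2 : ℝ)) : ℂ) ^ 2 *
          (-(starRingEnd ℂ τ)) +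
          2 * (π : ℂ) * Complex.I * ((((n:ℝ) + a + 1/2 : ℝ)) : ℂ) * (((b + 1/2 : ℝ)) : ℂ)) *
        Complex.exp (((-(π * ((n:ℝ) + a + 1/2) ^ 2) * t : ℝ)) : ℂ)
        = Complex.exp ((π : ℂ) * Complex.I * ((n:ℂ) + ((a:ℂ) + 1/2)) ^ 2 *
            (-(starRingEnd ℂ τ) + Complex.I * (t:ℂ)) +
          2 * (π : ℂ) * Complex.I * ((n:ℂ) + ((a:ℂ) + 1/2)) * ((b:ℂ) + 1/2)) := by
      rw [← Complex.exp_add]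
      congr 1
      push_cast
      linear_combination (-(π * ((n:ℂ) + a + 1/2) ^ 2 * (t:ℂ))) * Complex.I_sq
    calc Complex.I * (((n:ℝ) + a + 1/2 : ℝ) : ℂ) *
          Complex.exp ((π : ℂ) * Complex.I * ((((n:ℝ) + a + 1/2 : ℝ)) : ℂ) ^ 2 *
            (-(starRingEnd ℂ τ)) +
            2 * (π : ℂ) * Complex.I * ((((n:ℝ) + a + 1/2 : ℝ)) : ℂ) * (((b + 1/2 : ℝ)) : ℂ)) *
          Complex.exp (((-(π * ((n:ℝ) + a + 1/2) ^ 2) * t : ℝ)) : ℂ)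
        = Complex.I * (((n:ℝ) + a + 1/2 : ℝ) : ℂ) *
          (Complex.exp ((π : ℂ) * Complex.I * ((((n:ℝ) + a + 1/2 : ℝ)) : ℂ) ^ 2 *
            (-(starRingEnd ℂ τ)) +
            2 * (π : ℂ) * Complex.I * ((((n:ℝ) + a + 1/2 : ℝ)) : ℂ) * (((b + 1/2 : ℝ)) : ℂ)) *
          Complex.exp (((-(π * ((n:ℝ) + a + 1/2) ^ 2) * t : ℝ)) : ℂ)) := by ring
      _ = ((n:ℂ) + ((a:ℂ) + 1/2)) *
          Complex.exp ((π : ℂ) * Complex.I * ((n:ℂ) + ((a:ℂ) + 1/2)) ^ 2 *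
            (-(starRingEnd ℂ τ) + Complex.I * (t:ℂ)) +
            2 * (π : ℂ) * Complex.I * ((n:ℂ) + ((a:ℂ) + 1/2)) * ((b:ℂ) + 1/2)) *
          Complex.I := by
          rw [hexp]
          push_cast
          ring
  -- compute each integral
  have hIF : ∀ n : ℤ, (∫ t in Set.Ioi (0:ℝ), F n t) = cF a b τ n *
      ((Real.exp (2 * π * τ.im * ((n:ℝ) + a + 1/2) ^ 2) *
        (1 - Efun (|(n:ℝ) + a + 1/2| * Real.sqrt (2 * τ.im))) / |(n:ℝ) + a + 1/2| : ℝ) : ℂ) := by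
    intro n
    rw [hF]
    simp only []
    rw [MeasureTheory.integral_const_mul]
    have hor : ∫ t in Set.Ioi (0:ℝ),
        ((Real.exp (-(π * ((n:ℝ) + a + 1/2) ^ 2) * t) / Real.sqrt (2 * τ.im + t) : ℝ) : ℂ)
        = ((∫ t in Set.Ioi (0:ℝ),
            Real.exp (-(π * ((n:ℝ) + a + 1/2) ^ 2) * t) / Real.sqrt (2 * τ.im + t) : ℝ) : ℂ) :=
      integral_ofReal
    rw [hor, key_integral (hνne n) hy]
  -- assemble
  rw [← setIntegral_congr_fun measurableSet_Ioi hpt, ← hmeq]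
  have : ∀ n : ℤ, (∫ t in Set.Ioi (0:ℝ), F n t)
      = -Complex.exp (-(π : ℂ) * Complex.I * (a : ℂ) ^ 2 * τ +
          2 * (π : ℂ) * Complex.I * (a : ℂ) * ((b : ℂ) + 1/2)) *
        ((((Real.sign ((n : ℝ) + 1/2) -
            Efun (((n : ℝ) + 1/2 + ((a:ℂ) * τ - (b:ℂ)).im / τ.im) * Real.sqrt (2 * τ.im)) : ℝ)) : ℂ) *
          (-1 : ℂ) ^ n *
          Complex.exp (-(π : ℂ) * Complex.I * ((n : ℂ) + 1/2) ^ 2 * τ -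
            2 * (π : ℂ) * Complex.I * ((n : ℂ) + 1/2) * ((a:ℂ) * τ - (b:ℂ)))) := fun n => by
    rw [hIF n, term_eq ha1 ha2 b hτ n]
  rw [tsum_congr this, tsum_mul_left, Rfun]
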